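/- Kernel of ð on spin-weight 1 quantities on the round unit sphere: the space of globally defined spin-weight 1 quantities ξ with ðξ = 0 is exactly the 3-dimensional complex span of 1/P, z/P, z²/P where P = (1+ z z̄)/√2. Concretely: a smooth ξ : ℂ → ℂ satisfies ∂_z̄ (P ξ) = 0 iff ξ = h(z)/P for h entire; and ξ is global (i.e., v ↦ ξ(1/v, 1/v̄) v v̄^(−1) extends smoothly to 0) iff h is a polynomial of degree ≤ 2. -/

import Mathlib

/-- `P(z,z̄) = (1 + z z̄)/√2`. -/
noncomputable def Pc (z : ℂ) : ℂ := (1 + z * starRingEnd ℂ z) / (Real.sqrt 2 : ℝ)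

/-- Wirtinger derivative `∂_z̄ = ½(∂_x + i ∂_y)`. -/
noncomputable def dbar (f : ℂ → ℂ) (z : ℂ) : ℂ :=
  (fderiv ℝ f z 1 + Complex.I * fderiv ℝ f z Complex.I) / 2

open Filter Topology

lemma sqrt2C_ne : ((Real.sqrt 2 : ℝ) : ℂ) ≠ 0 := by
  have : (0:ℝ) < Real.sqrt 2 := Real.sqrt_pos.mpr two_pos
  exact_mod_cast this.ne'

lemma one_add_mul_conj_ne (z : ℂ) : (1 : ℂ) + z * starRingEnd ℂ z ≠ 0 := by
  rw [Complex.mul_conj]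
  have h : ((1 + Complex.normSq z : ℝ) : ℂ) ≠ 0 := by
    have : (0:ℝ) < 1 + Complex.normSq z :=
      add_pos_of_pos_of_nonneg one_pos (Complex.normSq_nonneg z)
    exact_mod_cast this.ne'
  simpa using h

lemma Pc_ne_zero (z : ℂ) : Pc z ≠ 0 :=
  div_ne_zero (one_add_mul_conj_ne z) sqrt2C_ne

lemma contDiff_conj : ContDiff ℝ (⊤ : ℕ∞) (fun z : ℂ => starRingEnd ℂ z) :=
  Complex.conjCLE.contDiff

lemma contDiff_Pc : ContDiff ℝ (⊤ : ℕ∞) Pc := by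
  unfold Pc
  exact (contDiff_const.add (contDiff_id.mul contDiff_conj)).div_const _

lemma dbar_eq_zero {f : ℂ → ℂ} {z : ℂ} (hf : DifferentiableAt ℂ f z) : dbar f z = 0 := by
  have h1 : fderiv ℝ f z = (fderiv ℂ f z).restrictScalars ℝ :=
    (hf.hasFDerivAt.restrictScalars ℝ).fderiv
  unfold dbar
  rw [h1]
  simp only [ContinuousLinearMap.coe_restrictScalars']
  have h2 : fderiv ℂ f z Complex.I = Complex.I * fderiv ℂ f z 1 := by
    have := (fderiv ℂ f z).map_smul Complex.I (1 : ℂ)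
    simpa [smul_eq_mul] using this
  rw [h2, ← mul_assoc, Complex.I_mul_I]
  ring

lemma differentiable_of_dbar {f : ℂ → ℂ} (hd : Differentiable ℝ f)
    (h : ∀ z, dbar f z = 0) : Differentiable ℂ f := by
  intro z
  rw [differentiableAt_iff_restrictScalars ℝ (hd z)]
  set L := fderiv ℝ f z with hL
  have hz := h z
  unfold dbar at hz
  rw [div_eq_zero_iff] at hz
  have h2 : L 1 + Complex.I * L Complex.I = 0 := by
    rcases hz with h' | h'
    · exact h'
    · exact absurd h' two_ne_zero
  have h3 : Complex.I * L Complex.I = -L 1 := eq_neg_of_add_eq_zero_right h2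
  have hLI : L Complex.I = Complex.I * L 1 := by
    calc L Complex.I = -(Complex.I * (Complex.I * L Complex.I)) := by
          rw [← mul_assoc, Complex.I_mul_I]; ring
      _ = Complex.I * L 1 := by rw [h3]; ring
  refine ⟨L 1 • ContinuousLinearMap.id ℂ ℂ, ?_⟩
  apply ContinuousLinearMap.ext
  intro w
  have hw : w = (w.re : ℝ) • (1:ℂ) + (w.im : ℝ) • Complex.I := by
    simp [Complex.real_smul, Complex.re_add_im]
  simp only [ContinuousLinearMap.coe_restrictScalars', ContinuousLinearMap.smul_apply,
    ContinuousLinearMap.id_apply, smul_eq_mul]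
  conv_rhs => rw [hw]
  rw [map_add, map_smul, map_smul, hLI]
  simp only [Complex.real_smul]
  have hw2 : (w.re : ℂ) + (w.im : ℂ) * Complex.I = w := Complex.re_add_im w
  linear_combination (-(L 1)) * hw2

lemma conj_ne_zero {v : ℂ} (hv : v ≠ 0) : starRingEnd ℂ v ≠ 0 := by
  simpa using hv

lemma Pc_inv {v : ℂ} (hv : v ≠ 0) : Pc (1/v) = Pc v / (v * starRingEnd ℂ v) := by
  have hvc := conj_ne_zero hv
  unfold Pc
  rw [map_div₀, map_one]
  field_simp
  ring

lemma key_formula (h : ℂ → ℂ) {v : ℂ} (hv : v ≠ 0) :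
    (h (1/v) / Pc (1/v)) * v * (starRingEnd ℂ v)⁻¹ = h (1/v) * v^2 / Pc v := by
  have hvc := conj_ne_zero hv
  rw [Pc_inv hv]
  field_simp [Pc_ne_zero]

lemma eval_deg2 {p : Polynomial ℂ} (hp : p.degree ≤ 2) (x : ℂ) :
    p.eval x = p.coeff 0 + p.coeff 1 * x + p.coeff 2 * x^2 := by
  have hn : p.natDegree < 3 := by
    have h2 : p.natDegree ≤ 2 := Polynomial.natDegree_le_iff_degree_le.mpr (by exact_mod_cast hp)
    omega
  rw [Polynomial.eval_eq_sum_range' hn]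
  simp [Finset.sum_range_succ]

/-- Kernel of `ð` on spin-weight 1 quantities on the round unit sphere:
a smooth `ξ` satisfies `∂_z̄(P ξ) = 0` iff `ξ = h/P` with `h` entire, and such a `ξ`
is globally defined on the sphere (i.e. `v ↦ ξ(1/v) v v̄^(−1)` extends smoothly across
the origin) iff `h` is a polynomial of degree at most 2 — so the kernel is the
3-dimensional span of `1/P, z/P, z²/P`. -/
theorem stmt_15 :
    (∀ xi : ℂ → ℂ, ContDiff ℝ (⊤ : ℕ∞) xi →
      ((∀ z, dbar (fun w => Pc w * xi w) z = 0) ↔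
        ∃ h : ℂ → ℂ, Differentiable ℂ h ∧ ∀ z, xi z = h z / Pc z)) ∧
    (∀ h : ℂ → ℂ, Differentiable ℂ h →
      ((∃ F : ℂ → ℂ, ContDiff ℝ (⊤ : ℕ∞) F ∧ ∀ v : ℂ, v ≠ 0 →
          F v = (h (1 / v) / Pc (1 / v)) * v * (starRingEnd ℂ v)⁻¹) ↔
        ∃ p : Polynomial ℂ, p.degree ≤ 2 ∧ ∀ z, h z = p.eval z)) := by
  constructor
  · -- Part 1
    intro xi hxi
    constructor
    · intro hz
      have hPxi : Differentiable ℝ (fun w => Pc w * xi w) :=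
        (contDiff_Pc.mul hxi).differentiable (by simp)
      have hdiff : Differentiable ℂ (fun w => Pc w * xi w) :=
        differentiable_of_dbar hPxi hz
      exact ⟨_, hdiff, fun z => (mul_div_cancel_left₀ _ (Pc_ne_zero z)).symm⟩
    · rintro ⟨h, hh, hxieq⟩ z
      have heq : (fun w => Pc w * xi w) = h := funext fun w => by
        rw [hxieq w, mul_comm, div_mul_cancel₀ _ (Pc_ne_zero w)]
      rw [heq]
      exact dbar_eq_zero (hh z)
  · -- Part 2
    intro h hh
    constructor
    · rintro ⟨F, hF, hFeq⟩
      -- G v = F v * Pc v equals h(1/v) v² off 0 and is entire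
      set G : ℂ → ℂ := fun v => F v * Pc v with hGdef
      have hG : ∀ v : ℂ, v ≠ 0 → G v = h (1/v) * v^2 := by
        intro v hv
        have := key_formula h hv
        rw [hGdef]
        simp only
        rw [hFeq v hv, this, div_mul_cancel₀ _ (Pc_ne_zero v)]
      have hGc : Continuous G :=
        (hF.continuous).mul contDiff_Pc.continuous
      have hgd : DifferentiableOn ℂ (fun v => h (1/v) * v^2) {(0:ℂ)}ᶜ := by
        intro v hv
        have hv' : v ≠ 0 := hv
        exact (((hh (1/v)).comp v ((differentiableAt_const (1:ℂ)).div differentiableAt_id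
          hv')).mul (differentiableAt_pow 2)).differentiableWithinAt
      have hGd' : DifferentiableOn ℂ G {(0:ℂ)}ᶜ := by
        apply DifferentiableOn.congr hgd
        intro v hv
        exact hG v hv
      have hGdiff : Differentiable ℂ G := by
        have huniv : (Set.univ : Set ℂ) ∈ 𝓝 (0:ℂ) := Filter.univ_mem
        have := (Complex.differentiableOn_compl_singleton_and_continuousAt_iff huniv).mp
          ⟨by simpa [Set.diff_eq] using hGd', hGc.continuousAt⟩
        rwa [differentiableOn_univ] at this
      -- second-order dslope
      set s : ℂ → ℂ := dslope (dslope G 0) 0 with hsdef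
      have hs : Differentiable ℂ s := by
        have huniv : (Set.univ : Set ℂ) ∈ 𝓝 (0:ℂ) := Filter.univ_mem
        have h1 : DifferentiableOn ℂ (dslope G 0) Set.univ :=
          (Complex.differentiableOn_dslope huniv).mpr hGdiff.differentiableOn
        have h2 : DifferentiableOn ℂ s Set.univ :=
          (Complex.differentiableOn_dslope huniv).mpr h1
        rwa [differentiableOn_univ] at h2
      have hGexp : ∀ v : ℂ, G v = G 0 + deriv G 0 * v + s v * v^2 := by
        intro v
        have e1 : (v - 0) • dslope G 0 v = G v - G 0 := sub_smul_dslope G 0 v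
        have e2 : (v - 0) • dslope (dslope G 0) 0 v = dslope G 0 v - dslope G 0 0 :=
          sub_smul_dslope (dslope G 0) 0 v
        rw [dslope_same] at e2
        rw [sub_zero, smul_eq_mul] at e1 e2
        rw [← hsdef] at e2
        linear_combination (-1 : ℂ) * e1 + (-v) * e2
      -- r z = h z - G 0 z² - deriv G 0 z is entire and tends to s 0 at ∞
      set r : ℂ → ℂ := fun z => h z - G 0 * z^2 - deriv G 0 * z with hrdef
      have hrdiff : Differentiable ℂ r := by
        apply Differentiable.sub
        apply Differentiable.sub hh
        · exact (differentiable_pow 2).const_mul _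
        · exact differentiable_id.const_mul _
      have hr : ∀ z : ℂ, z ≠ 0 → r z = s (1/z) := by
        intro z hz
        have h1z : (1/z : ℂ) ≠ 0 := one_div_ne_zero hz
        have hh2 : G (1/z) = h z * (1/z)^2 := by
          rw [hG (1/z) h1z, one_div_one_div]
        have hexp := hGexp (1/z)
        rw [hh2] at hexp
        show h z - G 0 * z^2 - deriv G 0 * z = s (1/z)
        field_simp at hexp
        have hz3 : (z:ℂ)^3 ≠ 0 := pow_ne_zero _ hz
        have h5 : (h z - G 0 * z^2 - deriv G 0 * z - s (1/z)) * z^3 = 0 := by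
          linear_combination z^3 * hexp
        have h6 := (mul_eq_zero.mp h5).resolve_right hz3
        linear_combination h6
      have htend : Tendsto r (cocompact ℂ) (𝓝 (s 0)) := by
        have hinv : Tendsto (fun z : ℂ => 1/z) (cocompact ℂ) (𝓝 0) := by
          simpa [one_div] using
            (tendsto_inv₀_cobounded (α := ℂ)).mono_left Metric.cobounded_eq_cocompact.ge
        have h1 : Tendsto (fun z : ℂ => s (1/z)) (cocompact ℂ) (𝓝 (s 0)) :=
          (hs.continuous.continuousAt).tendsto.comp hinv
        have hev : (fun z : ℂ => s (1/z)) =ᶠ[cocompact ℂ] r := by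
          have hmem : ({(0:ℂ)}ᶜ : Set ℂ) ∈ cocompact ℂ :=
            mem_cocompact.mpr ⟨{0}, isCompact_singleton, subset_rfl⟩
          filter_upwards [hmem] with z hz
          exact (hr z hz).symm
        exact h1.congr' hev
      have hrconst : r = Function.const ℂ (s 0) :=
        hrdiff.eq_const_of_tendsto_cocompact htend
      refine ⟨Polynomial.C (s 0) + Polynomial.C (deriv G 0) * Polynomial.X +
        Polynomial.C (G 0) * Polynomial.X ^ 2, ?_, ?_⟩
      · compute_degree
      · intro z
        have hrz : h z - G 0 * z^2 - deriv G 0 * z = s 0 := congrFun hrconst z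
        simp only [Polynomial.eval_add, Polynomial.eval_mul, Polynomial.eval_C,
          Polynomial.eval_X, Polynomial.eval_pow]
        linear_combination hrz
    · rintro ⟨p, hpdeg, hpeq⟩
      refine ⟨fun v => (p.coeff 0 * v^2 + p.coeff 1 * v + p.coeff 2) / Pc v, ?_, ?_⟩
      · have hnum : ContDiff ℝ (⊤ : ℕ∞) (fun v : ℂ => p.coeff 0 * v^2 + p.coeff 1 * v + p.coeff 2) :=
          ((contDiff_const.mul (contDiff_id.pow 2)).add
            (contDiff_const.mul contDiff_id)).add contDiff_const
        simpa only [div_eq_mul_inv] using (hnum.mul (contDiff_Pc.inv Pc_ne_zero) :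
          ContDiff ℝ (⊤ : ℕ∞) (fun v : ℂ => (p.coeff 0 * v^2 + p.coeff 1 * v + p.coeff 2) * (Pc v)⁻¹))
      · intro v hv
        rw [key_formula h hv, hpeq (1/v), eval_deg2 hpdeg]
        have hPc := Pc_ne_zero v
        field_simp
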